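/- Let V be a finite vertex set partitioned into nonempty blocks V₁, …, V_N, and let an acyclic directed mixed graph on V be given by a directed edge relation D ⊆ V×V with no directed cycles and a symmetric irreflexive bidirected edge relation B ⊆ V×V. Assume: (1) every bidirected edge of B joins two vertices lying in the same block; (2) the coarsened graph G on {1,…,N} — which has a directed edge i → j (for i ≠ j) exactly when some directed edge of D goes from a vertex of V_i to a vertex of V_j — is a directed acyclic graph. Then for any two blocks i ≠ j that are not adjacent in G (no edge i → j or j → i), there exists no inducing path between any vertex x ∈ V_i and any vertex y ∈ V_j. -/
import Mathlib


/-- **Exclusion of certain inducing paths.**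
Let `V` be a finite vertex set partitioned into nonempty blocks indexed by `Fin N`
(via a surjective block map), and let an acyclic directed mixed graph on `V` be given
by a directed edge relation `D` with no directed cycles and a symmetric irreflexive
bidirected edge relation `B`.  Assume every bidirected edge joins two vertices of the
same block, and that the coarsened graph `Dc` on `Fin N` (with an edge `i → j`, for
`i ≠ j`, exactly when some `D`-edge goes from a vertex of block `i` to a vertex of
block `j`) is a DAG.  Then for any two blocks `i ≠ j` that are not adjacent in the
coarse graph, there is no inducing path between any vertex of block `i` and any vertex
of block `j`.

An inducing path between `x` and `y` is a path (a sequence of distinct vertices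
`v 0 = x, …, v n = y`, `n ≥ 1`, consecutive vertices joined by a `D`-edge in either
direction or a `B`-edge) on which every non-endpoint vertex is a collider (both
incident edges have an arrowhead at it) and every such collider is an ancestor of `x`
or of `y` (reflexive-transitive closure of `D`). -/
theorem no_inducing_path_between_nonadjacent_blocks
    {V : Type*} [Fintype V] {N : ℕ}
    (block : V → Fin N) (hblock : Function.Surjective block)
    (D : V → V → Prop) (B : V → V → Prop)
    -- D has no directed cycles:
    (hDacyclic : ∀ v, ¬ Relation.TransGen D v v)
    -- B is symmetric and irreflexive:
    (hBsymm : ∀ x y, B x y → B y x) (hBirrefl : ∀ x, ¬ B x x)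
    -- (1) every bidirected edge joins two vertices of the same block:
    (hBwithin : ∀ x y, B x y → block x = block y)
    -- the coarsened directed edge relation on blocks:
    (Dc : Fin N → Fin N → Prop)
    (hDc : ∀ i j, Dc i j ↔ i ≠ j ∧ ∃ x y, block x = i ∧ block y = j ∧ D x y)
    -- (2) the coarse graph is a DAG (no directed cycles):
    (hDcAcyclic : ∀ i, ¬ Relation.TransGen Dc i i) :
    ∀ i j : Fin N, i ≠ j → ¬ Dc i j → ¬ Dc j i →
    ∀ x y : V, block x = i → block y = j →
      ¬ ∃ (n : ℕ) (v : ℕ → V),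
          1 ≤ n ∧ v 0 = x ∧ v n = y ∧
          -- the vertices of the path are distinct:
          Set.InjOn v (Set.Iic n) ∧
          -- consecutive vertices are joined by an edge:
          (∀ t, t < n → D (v t) (v (t + 1)) ∨ D (v (t + 1)) (v t) ∨
            B (v t) (v (t + 1))) ∧
          -- every non-endpoint vertex is a collider ...
          (∀ t, 0 < t → t < n →
            ((D (v (t - 1)) (v t) ∨ B (v (t - 1)) (v t)) ∧
             (D (v (t + 1)) (v t) ∨ B (v t) (v (t + 1)))) ∧
            -- ... and an ancestor of x or of y:
            (Relation.ReflTransGen D (v t) x ∨ Relation.ReflTransGen D (v t) y)) := by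
  intro i j hij hij1 hji x y hx hy
  rintro ⟨n, v, hn, h0, hnv, hinj, hedge, hcol⟩
  -- lifting ancestry to the coarse graph
  have lift : ∀ u w : V, Relation.ReflTransGen D u w →
      Relation.ReflTransGen Dc (block u) (block w) := by
    intro u w h
    induction h with
    | refl => exact Relation.ReflTransGen.refl
    | @tail b c h1 h2 ih =>
      by_cases hbc : block b = block c
      · rwa [hbc] at ih
      · exact ih.tail ((hDc _ _).2 ⟨hbc, _, _, rfl, rfl, h2⟩)
  rcases eq_or_lt_of_le hn with heq | h2
  · -- case n = 1
    have he := hedge 0 (by omega)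
    have hv1 : v 1 = y := by rw [heq]; exact hnv
    rw [h0, hv1] at he
    rcases he with he | he | he
    · exact hij1 ((hDc i j).2 ⟨hij, x, y, hx, hy, he⟩)
    · exact hji ((hDc j i).2 ⟨hij.symm, y, x, hy, hx, he⟩)
    · exact hij (by rw [← hx, ← hy, hBwithin _ _ he])
  · -- case n ≥ 2 : all interior vertices lie in the same block
    have hconst : ∀ t, 1 ≤ t → t ≤ n - 1 → block (v t) = block (v 1) := by
      intro t
      induction t with
      | zero => intro h; omega
      | succ k ih =>
        intro _ hk1
        by_cases hk : 1 ≤ k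
        · have hkn : k ≤ n - 1 := by omega
          have heqk := ih hk hkn
          have e1 := (hcol k (by omega) (by omega)).1.2
          have e2 := (hcol (k + 1) (by omega) (by omega)).1.1
          have hsub : k + 1 - 1 = k := by omega
          rw [hsub] at e2
          rcases e1 with e1 | e1
          · rcases e2 with e2 | e2
            · exact absurd (Relation.TransGen.head e2 (Relation.TransGen.single e1))
                (hDacyclic _)
            · rw [← hBwithin _ _ e2]; exact heqk
          · rw [← hBwithin _ _ e1]; exact heqk
        · have hk0 : k + 1 = 1 := by omega
          rw [hk0]
    have hb := hconst (n - 1) (by omega) le_rfl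
    -- arrowhead at v 1 from x
    have hxe : D (v 0) (v 1) ∨ B (v 0) (v 1) := (hcol 1 (by omega) (by omega)).1.1
    rw [h0] at hxe
    -- arrowhead at v (n-1) from y
    have hye := (hcol (n - 1) (by omega) (by omega)).1.2
    have hn1 : n - 1 + 1 = n := by omega
    rw [hn1, hnv] at hye
    rcases hye with hye | hye
    · -- D y (v (n-1))
      by_cases hbj : block (v 1) = j
      · rcases hxe with hxe | hxe
        · exact hij1 ((hDc i j).2 ⟨hij, x, v 1, hx, hbj, hxe⟩)
        · exact hij (by rw [← hx, hBwithin _ _ hxe, hbj])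
      · have hDcjb : Dc j (block (v 1)) :=
          (hDc _ _).2 ⟨fun h => hbj h.symm, y, v (n - 1), hy, hb, hye⟩
        rcases hxe with hxe | hxe
        · by_cases hbi : block (v 1) = i
          · exact hji (hbi ▸ hDcjb)
          · have hDcib : Dc i (block (v 1)) :=
              (hDc _ _).2 ⟨fun h => hbi h.symm, x, v 1, hx, rfl, hxe⟩
            rcases (hcol 1 (by omega) (by omega)).2 with ha | ha
            · exact hDcAcyclic i (Relation.TransGen.head' hDcib (hx ▸ lift _ _ ha))
            · exact hDcAcyclic j (Relation.TransGen.head' hDcjb (hy ▸ lift _ _ ha))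
        · have hbi : block (v 1) = i := by rw [← hBwithin _ _ hxe, hx]
          exact hji (hbi ▸ hDcjb)
    · -- B (v (n-1)) y
      have hbj : block (v 1) = j := by rw [← hb, hBwithin _ _ hye, hy]
      rcases hxe with hxe | hxe
      · exact hij1 ((hDc i j).2 ⟨hij, x, v 1, hx, hbj, hxe⟩)
      · exact hij (by rw [← hx, hBwithin _ _ hxe, hbj])
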